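/- Let P be a real symmetric positive definite n×n matrix, β > 0, γ₁ > 0, γ₂ > 0, θ > 0, C' ≥ 0, ϖ ≥ 0. Let (Φ_k)_{k∈ℕ} be real n×n matrices, (S_k) positive reals, (w_k) vectors in ℝⁿ with ‖w_k‖₂² ≤ θ for all k, and x : ℕ → ℝⁿ with x_{k+1} = Φ_k x_k + w_k. Suppose for every k: if x_kᵀ P x_k > 1 then there exist a real symmetric matrix Q_k with x_kᵀ Q_k x_k ≥ 0 and ε_k > 0 such that the block matrix [[−ε_k Q_k − Φ_kᵀ P Φ_k + (e^{−β S_k} − γ₁)P, −Φ_kᵀ P, 0],[−P Φ_k, (γ₂/θ)·I − P, 0],[0, 0, γ₁ − γ₂]] is positive semidefinite; while if x_kᵀ P x_k ≤ 1 then ‖Φ_k‖₂ ≤ C' and ‖w_k‖₂ ≤ ϖ. Then with μ = max(1, λ_max(P)·(C'/√(λ_min(P)) + ϖ)²) and τ_k = Σ_{j<k} S_k, one has x_kᵀ P x_k ≤ max(e^{−β τ_k} · x₀ᵀ P x₀, μ) for all k ∈ ℕ; in particular the trajectory is globally uniformly ultimately bounded and ultimately remains in E(P, μ) = {x : xᵀPx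 ≤ μ}. -/

import Mathlib

open Matrix RealInnerProductSpace

/-- The Euclidean norm on `Fin n → ℝ`. -/
noncomputable def eNorm {n : ℕ} (x : Fin n → ℝ) : ℝ := Real.sqrt (∑ i, x i ^ 2)

/-- The operator norm of a matrix induced by the Euclidean norm. -/
noncomputable def opNorm2 {n : ℕ} (A : Matrix (Fin n) (Fin n) ℝ) : ℝ :=
  ‖LinearMap.toContinuousLinearMap (Matrix.toEuclideanLin A)‖

/-- The largest eigenvalue of a Hermitian (real symmetric) matrix. -/
noncomputable def lamMax {n : ℕ} {A : Matrix (Fin n) (Fin n) ℝ} (hA : A.IsHermitian) : ℝ :=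
  ⨆ i, hA.eigenvalues i

/-- The smallest eigenvalue of a Hermitian (real symmetric) matrix. -/
noncomputable def lamMin {n : ℕ} {A : Matrix (Fin n) (Fin n) ℝ} (hA : A.IsHermitian) : ℝ :=
  ⨅ i, hA.eigenvalues i

lemma eNorm_eq_norm {n : ℕ} (x : Fin n → ℝ) :
    eNorm x = ‖(WithLp.equiv 2 (Fin n → ℝ)).symm x‖ := by
  rw [EuclideanSpace.norm_eq]
  simp [eNorm, Real.norm_eq_abs, sq_abs]

lemma eNorm_nonneg {n : ℕ} (x : Fin n → ℝ) : 0 ≤ eNorm x := Real.sqrt_nonneg _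

lemma eNorm_sq {n : ℕ} (x : Fin n → ℝ) : eNorm x ^ 2 = ∑ i, x i ^ 2 :=
  Real.sq_sqrt (Finset.sum_nonneg fun _ _ => sq_nonneg _)

lemma eNorm_add_le {n : ℕ} (x y : Fin n → ℝ) : eNorm (x + y) ≤ eNorm x + eNorm y := by
  simp only [eNorm_eq_norm]
  exact norm_add_le _ _

lemma eNorm_mulVec_le {n : ℕ} (A : Matrix (Fin n) (Fin n) ℝ) (x : Fin n → ℝ) :
    eNorm (A *ᵥ x) ≤ opNorm2 A * eNorm x := by
  simp only [eNorm_eq_norm]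
  have key : (LinearMap.toContinuousLinearMap (Matrix.toEuclideanLin A))
      ((WithLp.equiv 2 (Fin n → ℝ)).symm x) = (WithLp.equiv 2 (Fin n → ℝ)).symm (A *ᵥ x) := by
    rw [LinearMap.coe_toContinuousLinearMap', Matrix.toEuclideanLin_apply]
    simp
  have := (LinearMap.toContinuousLinearMap (Matrix.toEuclideanLin A)).le_opNorm
    ((WithLp.equiv 2 (Fin n → ℝ)).symm x)
  rw [key] at this
  exact this

lemma dotProduct_self_eq {n : ℕ} (v : Fin n → ℝ) : v ⬝ᵥ v = eNorm v ^ 2 := by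
  rw [eNorm_sq]
  simp [dotProduct, sq]

lemma quad_eq {n : ℕ} {A : Matrix (Fin n) (Fin n) ℝ} (hA : A.IsHermitian) (x : Fin n → ℝ) :
    x ⬝ᵥ A *ᵥ x = ∑ i, hA.eigenvalues i *
      (hA.eigenvectorBasis.repr ((WithLp.equiv 2 (Fin n → ℝ)).symm x) i) ^ 2 := by
  set X : EuclideanSpace ℝ (Fin n) := (WithLp.equiv 2 (Fin n → ℝ)).symm x with hX
  set b := hA.eigenvectorBasis with hb
  have h1 : x ⬝ᵥ A *ᵥ x = ⟪X, Matrix.toEuclideanLin A X⟫ := by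
    rw [Matrix.toEuclideanLin_apply]
    simp [PiLp.inner_apply, dotProduct, hX, mul_comm]
  have h2 : Matrix.toEuclideanLin A X = ∑ i, (b.repr X i * hA.eigenvalues i) • b i := by
    conv_lhs => rw [← b.sum_repr X]
    rw [map_sum]
    refine Finset.sum_congr rfl fun i _ => ?_
    rw [_root_.map_smul]
    have : Matrix.toEuclideanLin A (b i) = hA.eigenvalues i • b i := by
      apply (WithLp.equiv 2 (Fin n → ℝ)).injective
      simp only [Matrix.toEuclideanLin_apply, Equiv.apply_symm_apply]
      exact hA.mulVec_eigenvectorBasis i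
    rw [this, smul_smul]
  rw [h1, h2, inner_sum]
  refine Finset.sum_congr rfl fun i _ => ?_
  rw [real_inner_smul_right, real_inner_comm, ← b.repr_apply_apply]
  ring

lemma eNorm_sq_eq {n : ℕ} {A : Matrix (Fin n) (Fin n) ℝ} (hA : A.IsHermitian) (x : Fin n → ℝ) :
    eNorm x ^ 2 = ∑ i,
      (hA.eigenvectorBasis.repr ((WithLp.equiv 2 (Fin n → ℝ)).symm x) i) ^ 2 := by
  rw [eNorm_eq_norm]
  rw [← hA.eigenvectorBasis.repr.norm_map ((WithLp.equiv 2 (Fin n → ℝ)).symm x)]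
  rw [EuclideanSpace.norm_eq]
  rw [Real.sq_sqrt (Finset.sum_nonneg fun _ _ => sq_nonneg _)]
  simp [Real.norm_eq_abs, sq_abs]

lemma quad_le_lamMax {n : ℕ} (hn : 0 < n) {A : Matrix (Fin n) (Fin n) ℝ}
    (hA : A.IsHermitian) (x : Fin n → ℝ) :
    x ⬝ᵥ A *ᵥ x ≤ lamMax hA * eNorm x ^ 2 := by
  haveI : Nonempty (Fin n) := Fin.pos_iff_nonempty.mp hn
  rw [quad_eq hA x, eNorm_sq_eq hA x, Finset.mul_sum]
  exact Finset.sum_le_sum fun i _ => mul_le_mul_of_nonneg_right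
    (le_ciSup (Set.Finite.bddAbove (Set.finite_range _)) i) (sq_nonneg _)

lemma lamMin_le_quad {n : ℕ} (hn : 0 < n) {A : Matrix (Fin n) (Fin n) ℝ}
    (hA : A.IsHermitian) (x : Fin n → ℝ) :
    lamMin hA * eNorm x ^ 2 ≤ x ⬝ᵥ A *ᵥ x := by
  haveI : Nonempty (Fin n) := Fin.pos_iff_nonempty.mp hn
  rw [quad_eq hA x, eNorm_sq_eq hA x, Finset.mul_sum]
  exact Finset.sum_le_sum fun i _ => mul_le_mul_of_nonneg_right
    (ciInf_le (Set.Finite.bddBelow (Set.finite_range _)) i) (sq_nonneg _)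

lemma lamMin_pos {n : ℕ} (hn : 0 < n) {P : Matrix (Fin n) (Fin n) ℝ} (hP : P.PosDef) :
    0 < lamMin hP.1 := by
  haveI : Nonempty (Fin n) := Fin.pos_iff_nonempty.mp hn
  obtain ⟨i, hi⟩ := Finite.exists_min (fun i => hP.1.eigenvalues i)
  exact lt_of_lt_of_le (hP.eigenvalues_pos i) (le_ciInf hi)

lemma lamMax_pos {n : ℕ} (hn : 0 < n) {P : Matrix (Fin n) (Fin n) ℝ} (hP : P.PosDef) :
    0 < lamMax hP.1 := by
  haveI : Nonempty (Fin n) := Fin.pos_iff_nonempty.mp hn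
  have i : Fin n := Classical.arbitrary _
  exact lt_of_lt_of_le (hP.eigenvalues_pos i)
    (le_ciSup (Set.Finite.bddAbove (Set.finite_range _)) i)

lemma dp_transpose {n : ℕ} (A : Matrix (Fin n) (Fin n) ℝ) (u v : Fin n → ℝ) :
    u ⬝ᵥ (Aᵀ *ᵥ v) = (A *ᵥ u) ⬝ᵥ v := by
  rw [Matrix.dotProduct_mulVec, Matrix.vecMul_transpose]

lemma dp_symm {n : ℕ} {P : Matrix (Fin n) (Fin n) ℝ} (hPt : Pᵀ = P) (u v : Fin n → ℝ) :
    u ⬝ᵥ (P *ᵥ v) = v ⬝ᵥ (P *ᵥ u) := by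
  conv_lhs => rw [← hPt, dp_transpose, dotProduct_comm]

lemma lmi_step {n : ℕ} (a b : Fin n → ℝ) (P Q Φ : Matrix (Fin n) (Fin n) ℝ)
    (hPt : Pᵀ = P) (ε e γ₁ γ₂ θ : ℝ)
    (hM : (Matrix.fromBlocks
          (Matrix.fromBlocks
            ((-ε) • Q - Φᵀ * P * Φ + (e - γ₁) • P)
            (-(Φᵀ * P))
            (-(P * Φ)) ((γ₂ / θ) • (1 : Matrix (Fin n) (Fin n) ℝ) - P))
          0 0 ((γ₁ - γ₂) • (1 : Matrix (Fin 1) (Fin 1) ℝ))).PosSemidef) :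
    (Φ *ᵥ a + b) ⬝ᵥ (P *ᵥ (Φ *ᵥ a + b)) ≤
      -ε * (a ⬝ᵥ (Q *ᵥ a)) + (e - γ₁) * (a ⬝ᵥ (P *ᵥ a)) + (γ₂ / θ) * (b ⬝ᵥ b) + (γ₁ - γ₂) := by
  have h0 := hM.dotProduct_mulVec_nonneg (Sum.elim (Sum.elim a b) (fun _ => (1:ℝ)))
  rw [star_trivial] at h0
  simp only [Matrix.fromBlocks_mulVec, sumElim_dotProduct_sumElim,
    Matrix.zero_mulVec, add_zero, zero_add, Matrix.add_mulVec, Matrix.sub_mulVec,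
    Matrix.neg_mulVec, Matrix.smul_mulVec, Matrix.one_mulVec,
    dotProduct_add, dotProduct_sub, dotProduct_neg, dotProduct_smul, smul_eq_mul,
    Sum.elim_comp_inl, Sum.elim_comp_inr] at h0
  have f1 : a ⬝ᵥ ((Φᵀ * P * Φ) *ᵥ a) = (Φ *ᵥ a) ⬝ᵥ (P *ᵥ (Φ *ᵥ a)) := by
    rw [← Matrix.mulVec_mulVec, ← Matrix.mulVec_mulVec, dp_transpose]
  have f2 : a ⬝ᵥ ((Φᵀ * P) *ᵥ b) = (Φ *ᵥ a) ⬝ᵥ (P *ᵥ b) := by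
    rw [← Matrix.mulVec_mulVec, dp_transpose]
  have f3 : b ⬝ᵥ ((P * Φ) *ᵥ a) = b ⬝ᵥ (P *ᵥ (Φ *ᵥ a)) := by
    rw [← Matrix.mulVec_mulVec]
  have f4 : b ⬝ᵥ (P *ᵥ (Φ *ᵥ a)) = (Φ *ᵥ a) ⬝ᵥ (P *ᵥ b) := dp_symm hPt _ _
  have goalexp : (Φ *ᵥ a + b) ⬝ᵥ (P *ᵥ (Φ *ᵥ a + b)) =
      (Φ *ᵥ a) ⬝ᵥ (P *ᵥ (Φ *ᵥ a)) + 2 * ((Φ *ᵥ a) ⬝ᵥ (P *ᵥ b)) + b ⬝ᵥ (P *ᵥ b) := by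
    simp only [Matrix.mulVec_add, dotProduct_add, add_dotProduct]
    rw [dp_symm hPt b (Φ *ᵥ a)]
    ring
  have fone : ((fun _ => (1:ℝ)) ⬝ᵥ ((fun _ => (1:ℝ)) : Fin 1 → ℝ)) = 1 := by
    simp [dotProduct]
  rw [fone, mul_one] at h0
  rw [goalexp]
  linarith [h0]

/-- Proposition 4: offline self-triggering, perturbed case:
under the regional S-procedure LMI outside the unit ellipsoid and the maximal-interval
step inside it, `x_kᵀ P x_k ≤ max(e^{−β τ_k} x_0ᵀ P x_0, μ)` with
`μ = max(1, λ_max(P)(C'/√λ_min(P) + ϖ)²)`; in particular the trajectory is GUUB and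
ultimately remains in `E(P, μ)`. -/
theorem stmt12 {n : ℕ} (hn : 0 < n) (P : Matrix (Fin n) (Fin n) ℝ) (hP : P.PosDef)
    (β γ₁ γ₂ θ C' ϖ : ℝ) (hβ : 0 < β) (hγ₁ : 0 < γ₁) (hγ₂ : 0 < γ₂) (hθ : 0 < θ)
    (hC' : 0 ≤ C') (hϖ : 0 ≤ ϖ)
    (Φ : ℕ → Matrix (Fin n) (Fin n) ℝ) (S : ℕ → ℝ) (hS : ∀ k, 0 < S k)
    (w : ℕ → Fin n → ℝ) (hw : ∀ k, eNorm (w k) ^ 2 ≤ θ)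
    (x : ℕ → Fin n → ℝ) (hx : ∀ k, x (k + 1) = Φ k *ᵥ x k + w k)
    (htrig : ∀ k, 1 < x k ⬝ᵥ (P *ᵥ x k) →
      ∃ (Qk : Matrix (Fin n) (Fin n) ℝ) (εk : ℝ), Qk.IsHermitian ∧ 0 < εk ∧
        0 ≤ x k ⬝ᵥ (Qk *ᵥ x k) ∧
        (Matrix.fromBlocks
          (Matrix.fromBlocks
            ((-εk) • Qk - (Φ k)ᵀ * P * Φ k + (Real.exp (-β * S k) - γ₁) • P)
            (-((Φ k)ᵀ * P))
            (-(P * Φ k)) ((γ₂ / θ) • (1 : Matrix (Fin n) (Fin n) ℝ) - P))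
          0 0 ((γ₁ - γ₂) • (1 : Matrix (Fin 1) (Fin 1) ℝ))).PosSemidef)
    (hin : ∀ k, x k ⬝ᵥ (P *ᵥ x k) ≤ 1 → opNorm2 (Φ k) ≤ C' ∧ eNorm (w k) ≤ ϖ) :
    ∀ k, x k ⬝ᵥ (P *ᵥ x k) ≤
      max (Real.exp (-β * ∑ j ∈ Finset.range k, S j) * (x 0 ⬝ᵥ (P *ᵥ x 0)))
        (max 1 (lamMax hP.1 * (C' / Real.sqrt (lamMin hP.1) + ϖ) ^ 2)) := by
  have hPt : Pᵀ = P := by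
    have h : Pᴴ = P := hP.1
    rwa [Matrix.conjTranspose_eq_transpose_of_trivial] at h
  set μ : ℝ := max 1 (lamMax hP.1 * (C' / Real.sqrt (lamMin hP.1) + ϖ) ^ 2) with hμ
  have hμ1 : (1:ℝ) ≤ μ := le_max_left _ _
  have hlmin := lamMin_pos hn hP
  have hlmax := lamMax_pos hn hP
  -- step outside the ellipsoid
  have hstep1 : ∀ k, 1 < x k ⬝ᵥ (P *ᵥ x k) →
      x (k+1) ⬝ᵥ (P *ᵥ x (k+1)) ≤ Real.exp (-β * S k) * (x k ⬝ᵥ (P *ᵥ x k)) := by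
    intro k hV
    obtain ⟨Q, ε, _, hε, hQx, hM⟩ := htrig k hV
    have key := lmi_step (x k) (w k) P Q (Φ k) hPt ε (Real.exp (-β * S k)) γ₁ γ₂ θ hM
    rw [hx k]
    have hs : (w k) ⬝ᵥ (w k) ≤ θ := by rw [dotProduct_self_eq]; exact hw k
    have h1 : 0 ≤ ε * (x k ⬝ᵥ (Q *ᵥ x k)) := mul_nonneg hε.le hQx
    have h2 : (γ₂ / θ) * ((w k) ⬝ᵥ (w k)) ≤ γ₂ := by
      have := mul_le_mul_of_nonneg_left hs (div_nonneg hγ₂.le hθ.le)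
      rwa [div_mul_cancel₀ γ₂ hθ.ne'] at this
    have h3 : γ₁ * 1 ≤ γ₁ * (x k ⬝ᵥ (P *ᵥ x k)) :=
      mul_le_mul_of_nonneg_left hV.le hγ₁.le
    have e1 : (Real.exp (-β * S k) - γ₁) * (x k ⬝ᵥ (P *ᵥ x k)) =
        Real.exp (-β * S k) * (x k ⬝ᵥ (P *ᵥ x k)) - γ₁ * (x k ⬝ᵥ (P *ᵥ x k)) := by ring
    rw [e1] at key
    linarith
  -- step inside the ellipsoid
  have hstep2 : ∀ k, x k ⬝ᵥ (P *ᵥ x k) ≤ 1 → x (k+1) ⬝ᵥ (P *ᵥ x (k+1)) ≤ μ := by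
    intro k hVle
    obtain ⟨hΦ, hwϖ⟩ := hin k hVle
    have hsqm : 0 < Real.sqrt (lamMin hP.1) := Real.sqrt_pos.mpr hlmin
    have hxk : eNorm (x k) ≤ 1 / Real.sqrt (lamMin hP.1) := by
      have h := lamMin_le_quad hn hP.1 (x k)
      have h2 : eNorm (x k) ^ 2 ≤ 1 / lamMin hP.1 := by
        rw [le_div_iff₀ hlmin, mul_comm]
        linarith
      have h3 := Real.sqrt_le_sqrt h2
      rw [Real.sqrt_sq (eNorm_nonneg _)] at h3
      calc eNorm (x k) ≤ Real.sqrt (1 / lamMin hP.1) := h3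
        _ = 1 / Real.sqrt (lamMin hP.1) := by
            rw [one_div, one_div, Real.sqrt_inv]
    have hnext : eNorm (x (k+1)) ≤ C' / Real.sqrt (lamMin hP.1) + ϖ := by
      rw [hx k]
      calc eNorm (Φ k *ᵥ x k + w k) ≤ eNorm (Φ k *ᵥ x k) + eNorm (w k) := eNorm_add_le _ _
        _ ≤ opNorm2 (Φ k) * eNorm (x k) + ϖ := by
            exact add_le_add (eNorm_mulVec_le _ _) hwϖ
        _ ≤ C' * (1 / Real.sqrt (lamMin hP.1)) + ϖ := by
            refine add_le_add_left ?_ _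
            exact mul_le_mul hΦ hxk (eNorm_nonneg _) hC'
        _ = C' / Real.sqrt (lamMin hP.1) + ϖ := by ring
    have hb : 0 ≤ C' / Real.sqrt (lamMin hP.1) + ϖ :=
      add_nonneg (div_nonneg hC' hsqm.le) hϖ
    calc x (k+1) ⬝ᵥ (P *ᵥ x (k+1)) ≤ lamMax hP.1 * eNorm (x (k+1)) ^ 2 :=
          quad_le_lamMax hn hP.1 _
      _ ≤ lamMax hP.1 * (C' / Real.sqrt (lamMin hP.1) + ϖ) ^ 2 := by
          exact mul_le_mul_of_nonneg_left
            (pow_le_pow_left₀ (eNorm_nonneg _) hnext 2) hlmax.le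
      _ ≤ μ := le_max_right _ _
  -- induction
  intro k
  induction k with
  | zero =>
    simpa using le_max_left (x 0 ⬝ᵥ (P *ᵥ x 0)) μ
  | succ k ih =>
    by_cases hV : 1 < x k ⬝ᵥ (P *ᵥ x k)
    · have h1 := hstep1 k hV
      have he : (0:ℝ) < Real.exp (-β * S k) := Real.exp_pos _
      have he1 : Real.exp (-β * S k) ≤ 1 := by
        rw [Real.exp_le_one_iff]
        have := (hS k).le
        nlinarith
      set A := Real.exp (-β * ∑ j ∈ Finset.range k, S j) * (x 0 ⬝ᵥ (P *ᵥ x 0)) with hA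
      have hAk : Real.exp (-β * S k) * A =
          Real.exp (-β * ∑ j ∈ Finset.range (k+1), S j) * (x 0 ⬝ᵥ (P *ᵥ x 0)) := by
        rw [hA, ← mul_assoc, ← Real.exp_add, Finset.sum_range_succ]
        ring_nf
      have step : Real.exp (-β * S k) * max A μ ≤
          max (Real.exp (-β * ∑ j ∈ Finset.range (k+1), S j) * (x 0 ⬝ᵥ (P *ᵥ x 0))) μ := by
        rcases max_cases A μ with ⟨hm, _⟩ | ⟨hm, _⟩
        · rw [hm, hAk]
          exact le_max_left _ _
        · rw [hm]
          refine le_trans ?_ (le_max_right _ μ)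
          exact mul_le_of_le_one_left (le_trans zero_le_one hμ1) he1
      calc x (k+1) ⬝ᵥ (P *ᵥ x (k+1)) ≤ Real.exp (-β * S k) * (x k ⬝ᵥ (P *ᵥ x k)) := h1
        _ ≤ Real.exp (-β * S k) * max A μ := mul_le_mul_of_nonneg_left ih he.le
        _ ≤ _ := step
    · push_neg at hV
      exact le_trans (hstep2 k hV) (le_max_right _ _)
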